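/- arXiv:1208.3278 — 2 statements merged into one kernel-verified Lean document; each statement's English description precedes it below -/
import Mathlib

section
/- Let Ω ∈ (0, π) and let N be a natural number. The real (2N+1)×(2N+1) matrix M with entries M_{k,m} = sinc(kπ + Ωm), indexed by k, m ∈ {−N,...,N}, is nonsingular (its determinant is nonzero). -/
open scoped BigOperators

/-- `sinc x = sin x / x` for `x ≠ 0`, and `sinc 0 = 1`. -/
noncomputable def sinc (x : ℝ) : ℝ := if x = 0 then 1 else Real.sin x / x

lemma sinc_mul_self (y : ℝ) : sinc y * y = Real.sin y := by
  unfold sinc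
  split
  · simp [*]
  · field_simp

lemma sinc_int_mul_pi {j : ℤ} (hj : j ≠ 0) : sinc ((j : ℝ) * Real.pi) = 0 := by
  have h : (j : ℝ) * Real.pi ≠ 0 :=
    mul_ne_zero (Int.cast_ne_zero.mpr hj) Real.pi_ne_zero
  unfold sinc
  rw [if_neg h, Real.sin_int_mul_pi, zero_div]

namespace SincAux

open Polynomial Finset

variable (N : ℕ)

/-- integer index `k ↦ k - N`. -/
def ii (k : Fin (2 * N + 1)) : ℤ := (k : ℤ) - N

lemma ii_inj : Function.Injective (ii N) := by
  intro k l h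
  unfold ii at h
  exact Fin.ext (by omega)

lemma abs_ii_le (k : Fin (2 * N + 1)) : |ii N k| ≤ N := by
  have := k.isLt
  unfold ii
  rw [abs_le]
  omega

/-- the nodes `kπ`. -/
noncomputable def bb (k : Fin (2 * N + 1)) : ℝ := (ii N k : ℝ) * Real.pi

lemma bb_inj : Function.Injective (bb N) := by
  intro k l h
  unfold bb at h
  have := mul_right_cancel₀ Real.pi_ne_zero h
  exact ii_inj N (by exact_mod_cast this)

variable (e : Fin (2 * N + 1) → ℝ)

noncomputable def P : Polynomial ℝ :=
  ∑ k, C (e k) * ∏ j ∈ Finset.univ.erase k, (X + C (bb N j))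

lemma P_eval (x : ℝ) :
    (P N e).eval x = ∑ k, e k * ∏ j ∈ Finset.univ.erase k, (x + bb N j) := by
  unfold P
  rw [eval_finset_sum]
  refine Finset.sum_congr rfl fun k _ => ?_
  rw [eval_mul, eval_C, eval_prod]
  simp

lemma P_natDegree_lt : (P N e).natDegree < 2 * N + 1 := by
  have h : (P N e).natDegree ≤ 2 * N := by
    apply natDegree_sum_le_of_forall_le
    intro k _
    refine le_trans (natDegree_mul_le) ?_
    rw [natDegree_C]
    simp only [zero_add]
    refine le_trans (natDegree_prod_le _ _) ?_
    have : ∀ j ∈ Finset.univ.erase k, (X + C (bb N j)).natDegree = 1 := by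
      intro j _; exact natDegree_X_add_C _
    rw [Finset.sum_congr rfl this]
    simp [Finset.card_erase_of_mem]
  omega

lemma P_eval_neg_bb (k : Fin (2 * N + 1)) :
    (P N e).eval (-(bb N k)) =
      e k * ∏ j ∈ Finset.univ.erase k, (bb N j - bb N k) := by
  rw [P_eval]
  rw [Finset.sum_eq_single k]
  · congr 1
    refine Finset.prod_congr rfl fun j _ => by ring
  · intro t _ ht
    apply mul_eq_zero_of_right
    apply Finset.prod_eq_zero (Finset.mem_erase.mpr ⟨Ne.symm ht, Finset.mem_univ k⟩)
    ring
  · intro h; exact absurd (Finset.mem_univ k) h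

end SincAux

/-- Nonsingularity of the sinc sampling matrix
`M_{k,m} = sinc(kπ + Ωm)`, `k, m ∈ {-N,…,N}` (Theorem 1(a) of Lee–Ferreira),
indexed by `Fin (2N+1)` via `k ↦ k - N`. -/
theorem sinc_matrix_nonsingular
    (Ω : ℝ) (hΩ : Ω ∈ Set.Ioo 0 Real.pi) (N : ℕ) :
    (Matrix.of fun k m : Fin (2 * N + 1) =>
        sinc ((((k : ℤ) : ℝ) - (N : ℝ)) * Real.pi +
          Ω * (((m : ℤ) : ℝ) - (N : ℝ)))).det ≠ 0 := by
  classical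
  open SincAux Finset Polynomial in
  obtain ⟨hΩ0, hΩπ⟩ := hΩ
  intro hdet
  obtain ⟨v, hv, hvM⟩ := Matrix.exists_vecMul_eq_zero_iff.mpr hdet
  -- notation
  set b : Fin (2 * N + 1) → ℝ := bb N with hb
  have hbdef : ∀ k, b k = (ii N k : ℝ) * Real.pi := fun k => rfl
  have hiidef : ∀ k : Fin (2 * N + 1), ((ii N k : ℤ) : ℝ) = ((k : ℤ) : ℝ) - N := by
    intro k; unfold ii; push_cast; ring
  -- the coefficients with alternating signs
  set e : Fin (2 * N + 1) → ℝ := fun k => (-1 : ℝ) ^ (ii N k) * v k with he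
  set P : Polynomial ℝ := SincAux.P N e with hP
  -- the sampled function vanishes
  have hf : ∀ m : Fin (2 * N + 1),
      ∑ k, v k * sinc (b k + Ω * ((ii N m : ℤ) : ℝ)) = 0 := by
    intro m
    have := congrFun hvM m
    simpa [Matrix.vecMul, dotProduct, hbdef, hiidef] using this
  -- key algebraic identity
  have hstar : ∀ x : ℝ,
      (∑ k, v k * sinc (b k + x)) * ∏ j, (x + b j) = Real.sin x * P.eval x := by
    intro x
    rw [SincAux.P_eval, Finset.sum_mul, Finset.mul_sum]
    refine Finset.sum_congr rfl fun k _ => ?_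
    rw [← Finset.mul_prod_erase Finset.univ _ (Finset.mem_univ k)]
    have h1 : v k * sinc (b k + x) * ((x + b k) * ∏ j ∈ Finset.univ.erase k, (x + b j))
        = v k * (sinc (b k + x) * (b k + x)) * ∏ j ∈ Finset.univ.erase k, (x + b j) := by
      ring
    rw [h1, sinc_mul_self]
    have h2 : Real.sin (b k + x) = (-1 : ℝ) ^ (ii N k) * Real.sin x := by
      rw [hbdef, add_comm]
      exact Real.sin_add_int_mul_pi x (ii N k)
    rw [h2, he]
    ring
  -- P vanishes at the sample points
  have hPm : ∀ m : Fin (2 * N + 1), P.eval (Ω * ((ii N m : ℤ) : ℝ)) = 0 := by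
    intro m
    set x : ℝ := Ω * ((ii N m : ℤ) : ℝ) with hx
    by_cases hs : Real.sin x = 0
    · -- degenerate sample: x = jπ with |j| ≤ N
      obtain ⟨j, hj⟩ := Real.sin_eq_zero_iff.mp hs
      have habs : |j| ≤ (N : ℤ) := by
        have h1 : |(j : ℝ)| * Real.pi = Ω * |((ii N m : ℤ) : ℝ)| := by
          rw [← abs_of_pos Real.pi_pos, ← abs_mul, hj, hx, abs_mul, abs_of_pos hΩ0]
        have h2 : |((ii N m : ℤ) : ℝ)| ≤ (N : ℝ) := by
          rw [← Int.cast_abs]; exact_mod_cast abs_ii_le N m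
        have h3 : |(j : ℝ)| * Real.pi < ((N : ℝ) + 1) * Real.pi := by
          calc |(j : ℝ)| * Real.pi = Ω * |((ii N m : ℤ) : ℝ)| := h1
            _ ≤ Ω * N := by
                exact mul_le_mul_of_nonneg_left h2 (le_of_lt hΩ0)
            _ ≤ Real.pi * N := mul_le_mul_of_nonneg_right (le_of_lt hΩπ) (by positivity)
            _ < ((N : ℝ) + 1) * Real.pi := by
                rw [mul_comm]
                have := Real.pi_pos
                nlinarith
        have h4 : |(j : ℝ)| < (N : ℝ) + 1 := by
          have hpi := Real.pi_pos
          nlinarith [abs_nonneg (j : ℝ)]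
        have h5 : (|j| : ℤ) < (N : ℤ) + 1 := by
          rw [← Int.cast_abs] at h4
          exact_mod_cast h4
        omega
      -- the index k₀ with ii k₀ = -j
      have hk0nat : (N - j).toNat < 2 * N + 1 := by
        rw [abs_le] at habs; omega
      set k₀ : Fin (2 * N + 1) := ⟨(N - j).toNat, hk0nat⟩ with hk0
      have hik0 : ii N k₀ = -j := by
        unfold ii
        rw [abs_le] at habs
        simp [hk0]
        omega
      have hbk0 : b k₀ = -x := by
        rw [hbdef, hik0, ← hj]; push_cast; ring
      -- the degenerate sample picks out v k₀
      have hvk0 : v k₀ = 0 := by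
        have := hf m
        rw [← hx] at this
        rw [Finset.sum_eq_single k₀] at this
        · rw [hbk0] at this
          simpa [sinc] using this
        · intro t _ ht
          have : b t + x = ((ii N t + j : ℤ) : ℝ) * Real.pi := by
            rw [hbdef, ← hj]; push_cast; ring
          rw [this, sinc_int_mul_pi]
          · ring
          · intro hcon
            apply ht
            apply ii_inj N
            rw [hik0]
            omega
        · intro h; exact absurd (Finset.mem_univ k₀) h
      have hek0 : e k₀ = 0 := by rw [he]; simp [hvk0]
      have : x = -(b k₀) := by rw [hbk0]; ring
      rw [this, hP, SincAux.P_eval_neg_bb, hek0, zero_mul]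
    · -- nondegenerate sample
      have h0 := hstar x
      rw [hf m, zero_mul] at h0
      have := h0.symm
      rcases mul_eq_zero.mp this with h | h
      · exact absurd h hs
      · exact h
  -- P has too many roots, hence is zero
  have hPzero : P = 0 := by
    apply Polynomial.eq_zero_of_natDegree_lt_card_of_eval_eq_zero P
      (f := fun m : Fin (2 * N + 1) => Ω * ((ii N m : ℤ) : ℝ))
    · intro k l h
      apply ii_inj N
      have := mul_left_cancel₀ (ne_of_gt hΩ0) h
      exact_mod_cast this
    · exact hPm
    · rw [Fintype.card_fin]
      exact SincAux.P_natDegree_lt N e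
  -- hence all coefficients vanish
  have hvzero : v = 0 := by
    funext k
    have h0 : P.eval (-(b k)) = 0 := by rw [hPzero]; simp
    rw [hP, SincAux.P_eval_neg_bb] at h0
    have hprod : ∏ j ∈ Finset.univ.erase k, (b j - b k) ≠ 0 := by
      apply Finset.prod_ne_zero_iff.mpr
      intro j hj
      have hjk : j ≠ k := (Finset.mem_erase.mp hj).1
      exact sub_ne_zero_of_ne fun hcon => hjk (bb_inj N hcon)
    have hek : e k = 0 := by
      rcases mul_eq_zero.mp h0 with h | h
      · exact h
      · exact absurd h hprod
    rw [he] at hek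
    have hne : ((-1 : ℝ) ^ (ii N k)) ≠ 0 := by
      apply zpow_ne_zero; norm_num
    simpa [hne] using (mul_eq_zero.mp hek).resolve_left hne
  exact hv hvzero
end

section
/- Let Ω ∈ (0, π] and let k, m be integers. Then the series Σ_{t∈ℤ} sinc(kπ + Ωt) · sinc(mπ + Ωt) converges, and its sum equals π/Ω if k = m and equals 0 if k ≠ m. -/
open MeasureTheory Set ComplexConjugate
open Real hiding sinc

theorem sinc_eq_real_sinc : sinc = Real.sinc := rfl

theorem hasSum_conj_fourierCoeff_mul_fourierCoeff {T : ℝ} [Fact (0 < T)]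
    (f g : Lp ℂ 2 (@AddCircle.haarAddCircle T _)) :
    HasSum (fun i => conj (fourierCoeff f i) * fourierCoeff g i)
      (∫ t, conj (f t) * g t ∂AddCircle.haarAddCircle) := by
  have h := fourierBasis.hasSum_inner_mul_inner f g
  rw [L2.inner_def] at h
  simpa only [← inner_conj_symm f, ← fourierBasis.repr_apply_apply, fourierBasis_repr,
    RCLike.inner_apply'] using h

theorem hasSum_conj_fourierCoeffOn_mul_fourierCoeffOn {a b : ℝ} {f g : ℝ → ℂ} (hab : a < b)
    (hf : MemLp f 2 (volume.restrict (Ioc a b))) (hg : MemLp g 2 (volume.restrict (Ioc a b))) :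
    HasSum (fun i => conj (fourierCoeffOn hab f i) * fourierCoeffOn hab g i)
      ((b - a)⁻¹ • ∫ x in a..b, conj (f x) * g x) := by
  have := Fact.mk (by linarith : 0 < b - a)
  rw [← add_sub_cancel a b] at hf hg
  have hf' := hf.memLp_liftIoc.haarAddCircle
  have hg' := hg.memLp_liftIoc.haarAddCircle
  have hval : ∫ t, conj (MemLp.toLp _ hf' t) * MemLp.toLp _ hg' t ∂AddCircle.haarAddCircle
      = (b - a)⁻¹ • ∫ x in a..b, conj (f x) * g x := by
    calc _ = ∫ t, AddCircle.liftIoc (b - a) a (fun x => conj (f x) * g x) t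
          ∂AddCircle.haarAddCircle := by
          refine integral_congr_ae ?_
          filter_upwards [hf'.coeFn_toLp, hg'.coeFn_toLp] with t hft hgt
          rw [hft, hgt]
          rfl
      _ = _ := by
          rw [AddCircle.integral_haarAddCircle, AddCircle.integral_liftIoc_eq_intervalIntegral,
            add_sub_cancel]
  have h := hasSum_conj_fourierCoeff_mul_fourierCoeff hf'.toLp hg'.toLp
  rwa [fourierCoeff_congr_ae hf'.coeFn_toLp, fourierCoeff_congr_ae hg'.coeFn_toLp, hval] at h

noncomputable def bandExp (Ω c : ℝ) : ℝ → ℂ :=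
  (Ioc (-Ω) Ω).indicator fun x => Complex.exp ((c * x : ℝ) * Complex.I)

theorem conj_bandExp_mul_bandExp (Ω c d x : ℝ) :
    conj (bandExp Ω c x) * bandExp Ω d x = bandExp Ω (d - c) x := by
  by_cases hx : x ∈ Ioc (-Ω) Ω
  · simp only [bandExp, indicator_of_mem hx, ← Complex.exp_conj, ← Complex.exp_add, map_mul,
      Complex.conj_ofReal, Complex.conj_I]
    congr 1
    push_cast
    ring
  · simp [bandExp, indicator_of_notMem hx]

theorem memLp_bandExp (Ω c : ℝ) {p : ENNReal} {μ : Measure ℝ} [IsFiniteMeasure μ] :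
    MemLp (bandExp Ω c) p μ := by
  refine .of_bound ?_ 1 (.of_forall fun x => ?_)
  · exact (Measurable.indicator (by fun_prop) measurableSet_Ioc).aestronglyMeasurable
  · exact (norm_indicator_le_norm_self _ _).trans_eq (Complex.norm_exp_ofReal_mul_I _)

theorem integral_bandExp {Ω L : ℝ} (hΩ : 0 ≤ Ω) (hΩL : Ω ≤ L) (c : ℝ) :
    ∫ x in -L..L, bandExp Ω c x = 2 * Ω * sinc (c * Ω) := by
  have hsub : Ioc (-Ω) Ω ⊆ Ioc (-L) L := Ioc_subset_Ioc (by linarith) hΩL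
  rw [intervalIntegral.integral_of_le (by linarith), bandExp,
    setIntegral_indicator measurableSet_Ioc, inter_eq_right.mpr hsub,
    ← intervalIntegral.integral_of_le (by linarith)]
  rcases eq_or_ne c 0 with rfl | hc
  · simp [sinc, two_mul]
  · rw [intervalIntegral.integral_comp_mul_left (fun x : ℝ => Complex.exp (x * Complex.I)) hc,
      mul_neg, integral_exp_mul_I_eq_sinc, sinc_eq_real_sinc, Complex.real_smul]
    have hc' : (c : ℂ) ≠ 0 := by exact_mod_cast hc
    push_cast
    field_simp

theorem fourierCoeffOn_bandExp {Ω : ℝ} (hΩ : 0 ≤ Ω) (hΩπ : Ω ≤ π) (c : ℝ) (n : ℤ) :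
    fourierCoeffOn (neg_lt_self pi_pos) (bandExp Ω c) n =
      ((Ω / π * sinc ((c - n) * Ω) : ℝ) : ℂ) := by
  have hcoeff (x : ℝ) :
      fourier (-n) (x : AddCircle (π - -π)) • bandExp Ω c x = bandExp Ω (c - n) x := by
    by_cases hx : x ∈ Ioc (-Ω) Ω
    · simp only [bandExp, indicator_of_mem hx, fourier_coe_apply, smul_eq_mul, ← Complex.exp_add]
      congr 1
      push_cast
      field_simp
      ring
    · simp [bandExp, indicator_of_notMem hx]
  simp_rw [fourierCoeffOn_eq_integral, hcoeff, integral_bandExp hΩ hΩπ, Complex.real_smul]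
  push_cast
  field_simp
  ring

theorem hasSum_sinc_mul_sinc {Ω : ℝ} (hΩ : 0 < Ω) (hΩπ : Ω ≤ π) (u v : ℝ) :
    HasSum (fun t : ℤ => sinc (u + Ω * t) * sinc (v + Ω * t)) (π / Ω * sinc (v - u)) := by
  have hπ : -π < π := neg_lt_self pi_pos
  have hparseval := hasSum_conj_fourierCoeffOn_mul_fourierCoeffOn hπ
    (memLp_bandExp Ω (u / Ω)) (memLp_bandExp Ω (v / Ω))
  have hshift (w : ℝ) (n : ℤ) : (w / Ω - n) * Ω = w + Ω * (-n : ℤ) := by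
    push_cast
    field_simp
    ring
  simp only [fourierCoeffOn_bandExp hΩ.le hΩπ, conj_bandExp_mul_bandExp,
    integral_bandExp hΩ.le hΩπ, Complex.conj_ofReal, hshift] at hparseval
  have hval : (π - -π)⁻¹ • (2 * (Ω : ℂ) * sinc ((v / Ω - u / Ω) * Ω))
      = (((Ω / π) ^ 2 * (π / Ω * sinc (v - u)) : ℝ) : ℂ) := by
    rw [Complex.real_smul, div_sub_div_same, div_mul_cancel₀ _ hΩ.ne']
    push_cast
    field_simp
    ring
  rw [hval, ← (Equiv.neg ℤ).hasSum_iff] at hparseval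
  simp only [Function.comp_def, Equiv.neg_apply, neg_neg, ← Complex.ofReal_mul,
    Complex.hasSum_ofReal] at hparseval
  have hfactor : (fun t : ℤ => Ω / π * sinc (u + Ω * t) * (Ω / π * sinc (v + Ω * t)))
      = fun t : ℤ => (Ω / π) ^ 2 * (sinc (u + Ω * t) * sinc (v + Ω * t)) := by
    ext t
    ring
  rwa [hfactor, hasSum_mul_left_iff (pow_ne_zero 2 (div_ne_zero hΩ.ne' pi_ne_zero))] at hparseval

theorem sinc_int_mul_pi_s10 (n : ℤ) : sinc (n * π) = if n = 0 then 1 else 0 := by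
  split_ifs with hn
  · simp [hn, sinc]
  · have hnπ : (n : ℝ) * π ≠ 0 := mul_ne_zero (Int.cast_ne_zero.mpr hn) pi_ne_zero
    rw [sinc_eq_real_sinc, Real.sinc_of_ne_zero hnπ, sin_int_mul_pi, zero_div]

/-- Orthogonality of the integer-sampled shifted sinc functions:
`∑_{t∈ℤ} sinc(kπ + Ωt) sinc(mπ + Ωt)` converges, with sum `π/Ω` if `k = m`
and `0` otherwise. -/
theorem sinc_shifted_orthogonality
    (Ω : ℝ) (hΩ : Ω ∈ Set.Ioc 0 Real.pi) (k m : ℤ) :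
    Summable (fun t : ℤ =>
      sinc ((k : ℝ) * Real.pi + Ω * t) * sinc ((m : ℝ) * Real.pi + Ω * t)) ∧
    ∑' t : ℤ, sinc ((k : ℝ) * Real.pi + Ω * t) * sinc ((m : ℝ) * Real.pi + Ω * t) =
      if k = m then Real.pi / Ω else 0 := by
  have h := hasSum_sinc_mul_sinc hΩ.1 hΩ.2 (k * π) (m * π)
  rw [← sub_mul, ← Int.cast_sub, sinc_int_mul_pi_s10] at h
  refine ⟨h.summable, h.tsum_eq.trans ?_⟩
  simp [sub_eq_zero, eq_comm]
end
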